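/- Let Ω ⊆ ℂ be open and f₁, f₂ : Ω → ℂ holomorphic with f₁'(z) ≠ 0 and f₂'(z) ≠ 0 for every z ∈ Ω. Set τ := log(2|f₁'|/(1+|f₁|²)) and ρ := (|f₁'|(1+|f₂|²))/(|f₂'|(1+|f₁|²)). Then ρ satisfies the Ribaucour equation relative to τ on Ω, i.e. ρ² + e^{−2τ} ρ Δ₀ρ = 1 + e^{−2τ}(ρ_x² + ρ_y²). -/

import Mathlib

/-!
With `λᵢ = |fᵢ'| / (1 + |fᵢ|²)` (the density of the spherical metric pulled back by `fᵢ`) we have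
`e^τ = 2 λ₁` and `ρ = λ₁ / λ₂ = e^v` with `v = log λ₁ - log λ₂`. Each `log λᵢ` solves Liouville's
equation `Δ₀ log λᵢ = -4 λᵢ²`, and `Δ₀ e^v = e^v (Δ₀ v + |∇v|²)`, so the gradient terms of the
Ribaucour equation cancel and it reduces to `ρ² (1 + (λ₂² - λ₁²) / λ₁²) = 1`. All derivatives are
computed with the Wirtinger operators `∂_z`, `∂_z̄`, using `Δ₀ = 4 ∂_z ∂_z̄`.
-/

noncomputable def pdx (u : ℂ → ℝ) (z : ℂ) : ℝ := fderiv ℝ u z 1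

noncomputable def pdy (u : ℂ → ℝ) (z : ℂ) : ℝ := fderiv ℝ u z Complex.I

noncomputable def lap (u : ℂ → ℝ) (z : ℂ) : ℝ := pdx (pdx u) z + pdy (pdy u) z

open Complex Topology ComplexConjugate

noncomputable section

def wirtingerCLM (a b : ℂ) : ℂ →L[ℝ] ℂ :=
  a • ContinuousLinearMap.id ℝ ℂ + b • conjCLE.toContinuousLinearMap

@[simp] lemma wirtingerCLM_apply (a b e : ℂ) : wirtingerCLM a b e = a * e + b * conj e := by
  simp [wirtingerCLM]

/-- `a = ∂F/∂z` and `b = ∂F/∂z̄` at `z`. -/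
def HasWirtingerDerivAt (F : ℂ → ℂ) (a b z : ℂ) : Prop :=
  HasFDerivAt F (wirtingerCLM a b) z

/-- `a = ∂u/∂z` at `z`; since `u` is real, `∂u/∂z̄ = conj a`. -/
def HasRealWirtingerDerivAt (u : ℂ → ℝ) (a z : ℂ) : Prop :=
  HasWirtingerDerivAt (fun x => (u x : ℂ)) a (conj a) z

variable {F G : ℂ → ℂ} {u v : ℂ → ℝ} {a b c d z : ℂ}

lemma hasWirtingerDerivAt_of_hasFDerivAt {D : ℂ →L[ℝ] ℂ} (h : HasFDerivAt F D z)
    (hD : ∀ e, D e = a * e + b * conj e) : HasWirtingerDerivAt F a b z := by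
  unfold HasWirtingerDerivAt
  convert h
  ext1 e
  simp [hD]

namespace HasWirtingerDerivAt

lemma congr_of_eventuallyEq (h : HasWirtingerDerivAt F a b z) (hG : G =ᶠ[𝓝 z] F) :
    HasWirtingerDerivAt G a b z :=
  HasFDerivAt.congr_of_eventuallyEq h hG

lemma star (h : HasWirtingerDerivAt F a b z) :
    HasWirtingerDerivAt (fun x => conj (F x)) (conj b) (conj a) z :=
  hasWirtingerDerivAt_of_hasFDerivAt (conjCLE.toContinuousLinearMap.hasFDerivAt.comp z h)
    fun e => by simp; ring

lemma add (h : HasWirtingerDerivAt F a b z) (h' : HasWirtingerDerivAt G c d z) :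
    HasWirtingerDerivAt (fun x => F x + G x) (a + c) (b + d) z :=
  hasWirtingerDerivAt_of_hasFDerivAt (HasFDerivAt.add h h') fun e => by simp; ring

lemma sub (h : HasWirtingerDerivAt F a b z) (h' : HasWirtingerDerivAt G c d z) :
    HasWirtingerDerivAt (fun x => F x - G x) (a - c) (b - d) z :=
  hasWirtingerDerivAt_of_hasFDerivAt (HasFDerivAt.sub h h') fun e => by simp; ring

lemma mul (h : HasWirtingerDerivAt F a b z) (h' : HasWirtingerDerivAt G c d z) :
    HasWirtingerDerivAt (fun x => F x * G x) (F z * c + G z * a) (F z * d + G z * b) z :=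
  hasWirtingerDerivAt_of_hasFDerivAt (HasFDerivAt.mul h h') fun e => by simp; ring

end HasWirtingerDerivAt

lemma HasDerivAt.hasWirtingerDerivAt {f' : ℂ} (h : HasDerivAt F f' z) :
    HasWirtingerDerivAt F f' 0 z :=
  hasWirtingerDerivAt_of_hasFDerivAt (h.hasFDerivAt.restrictScalars ℝ) fun e => by simp [mul_comm]

namespace HasRealWirtingerDerivAt

lemma hasFDerivAt (h : HasRealWirtingerDerivAt u a z) :
    HasFDerivAt u (reCLM.comp (wirtingerCLM a (conj a))) z :=
  reCLM.hasFDerivAt.comp z h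

lemma pdx_eq (h : HasRealWirtingerDerivAt u a z) : pdx u z = 2 * a.re := by
  rw [pdx, h.hasFDerivAt.fderiv]; simp; ring

lemma pdy_eq (h : HasRealWirtingerDerivAt u a z) : pdy u z = -2 * a.im := by
  rw [pdy, h.hasFDerivAt.fderiv]; simp; ring

lemma pdx_sq_add_pdy_sq (h : HasRealWirtingerDerivAt u a z) :
    pdx u z ^ 2 + pdy u z ^ 2 = 4 * ‖a‖ ^ 2 := by
  rw [h.pdx_eq, h.pdy_eq, Complex.sq_norm, normSq_apply]; ring

lemma sub (h : HasRealWirtingerDerivAt u a z) (h' : HasRealWirtingerDerivAt v b z) :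
    HasRealWirtingerDerivAt (fun x => u x - v x) (a - b) z := by
  simpa [HasRealWirtingerDerivAt] using HasWirtingerDerivAt.sub h h'

lemma congr_of_eventuallyEq (h : HasRealWirtingerDerivAt u a z) (hv : v =ᶠ[𝓝 z] u) :
    HasRealWirtingerDerivAt v a z :=
  HasWirtingerDerivAt.congr_of_eventuallyEq h (hv.mono fun x hx => by simp [hx])

end HasRealWirtingerDerivAt

lemma HasDerivAt.comp_hasRealWirtingerDerivAt {φ : ℝ → ℝ} {φ' : ℝ}
    (hφ : HasDerivAt φ φ' (u z)) (hu : HasRealWirtingerDerivAt u a z) :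
    HasRealWirtingerDerivAt (fun x => φ (u x)) (φ' * a) z :=
  hasWirtingerDerivAt_of_hasFDerivAt
    (ofRealCLM.hasFDerivAt.comp z (hφ.comp_hasFDerivAt z hu.hasFDerivAt)) fun e => by
      apply Complex.ext <;> simp <;> ring

lemma HasDerivAt.hasRealWirtingerDerivAt_norm_sq {g' : ℂ} (hg : HasDerivAt F g' z) :
    HasRealWirtingerDerivAt (fun x => ‖F x‖ ^ 2) (g' * conj (F z)) z := by
  have h := hg.hasWirtingerDerivAt.mul hg.hasWirtingerDerivAt.star
  simp only [mul_conj', map_zero, mul_zero, zero_add, add_zero] at h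
  unfold HasRealWirtingerDerivAt
  convert h using 1 <;> simp [mul_comm]

lemma Filter.EventuallyEq.lap_eq (h : u =ᶠ[𝓝 z] v) : lap u z = lap v z := by
  have hx : pdx u =ᶠ[𝓝 z] pdx v := h.eventuallyEq_nhds.mono fun w hw => by
    simp only [pdx, hw.fderiv_eq]
  have hy : pdy u =ᶠ[𝓝 z] pdy v := h.eventuallyEq_nhds.mono fun w hw => by
    simp only [pdy, hw.fderiv_eq]
  simp only [lap, pdx, pdy, hx.fderiv_eq, hy.fderiv_eq]

lemma lap_eq_of_hasWirtingerDerivAt {A : ℂ → ℂ} {α β : ℂ}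
    (hu : ∀ᶠ w in 𝓝 z, HasRealWirtingerDerivAt u (A w) w) (hA : HasWirtingerDerivAt A α β z) :
    lap u z = 4 * β.re := by
  have hx : pdx u =ᶠ[𝓝 z] fun w => 2 * (A w).re := hu.mono fun w hw => hw.pdx_eq
  have hy : pdy u =ᶠ[𝓝 z] fun w => -2 * (A w).im := hu.mono fun w hw => hw.pdy_eq
  have hre : HasFDerivAt (fun w => 2 * (A w).re) ((2 : ℝ) • reCLM.comp (wirtingerCLM α β)) z :=
    (reCLM.hasFDerivAt.comp z hA).const_mul 2
  have him : HasFDerivAt (fun w => -2 * (A w).im) ((-2 : ℝ) • imCLM.comp (wirtingerCLM α β)) z :=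
    (imCLM.hasFDerivAt.comp z hA).const_mul (-2)
  rw [lap, pdx, pdy, hx.fderiv_eq, hy.fderiv_eq, hre.fderiv, him.fderiv]
  simp; ring

lemma lap_exp_eq {A : ℂ → ℂ} {α β : ℂ}
    (hv : ∀ᶠ w in 𝓝 z, HasRealWirtingerDerivAt v (A w) w) (hA : HasWirtingerDerivAt A α β z) :
    lap (fun x => Real.exp (v x)) z = 4 * Real.exp (v z) * (β.re + ‖A z‖ ^ 2) := by
  have hexp : ∀ᶠ w in 𝓝 z,
      HasRealWirtingerDerivAt (fun x => Real.exp (v x)) (Real.exp (v w) * A w) w :=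
    hv.mono fun w hw => (Real.hasDerivAt_exp _).comp_hasRealWirtingerDerivAt hw
  rw [lap_eq_of_hasWirtingerDerivAt hexp (HasWirtingerDerivAt.mul hexp.self_of_nhds hA), map_mul, conj_ofReal, mul_left_comm, mul_conj', ← ofReal_pow, ← mul_add, re_ofReal_mul,
    add_re, ofReal_re]
  ring

lemma ribaucour_equation_iff_of_eventuallyEq_exp {ρ : ℂ → ℝ} {A : ℂ → ℂ} {α β : ℂ} (E : ℝ)
    (hρ : ρ =ᶠ[𝓝 z] fun x => Real.exp (v x))
    (hv : ∀ᶠ w in 𝓝 z, HasRealWirtingerDerivAt v (A w) w) (hA : HasWirtingerDerivAt A α β z) :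
    ρ z ^ 2 + E * ρ z * lap ρ z = 1 + E * (pdx ρ z ^ 2 + pdy ρ z ^ 2) ↔
      ρ z ^ 2 * (1 + 4 * E * β.re) = 1 := by
  have hgrad := (((Real.hasDerivAt_exp _).comp_hasRealWirtingerDerivAt hv.self_of_nhds
    ).congr_of_eventuallyEq hρ).pdx_sq_add_pdy_sq
  rw [hρ.lap_eq, lap_exp_eq hv hA, hgrad, hρ.eq_of_nhds, norm_mul, norm_real, Real.norm_eq_abs,
    abs_of_pos (Real.exp_pos _)]
  constructor <;> intro h <;> linear_combination h

lemma hasRealWirtingerDerivAt_log_norm {g' : ℂ} (hg : HasDerivAt F g' z) (h0 : F z ≠ 0) :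
    HasRealWirtingerDerivAt (fun x => Real.log ‖F x‖) (g' / (2 * F z)) z := by
  have hpos : 0 < ‖F z‖ ^ 2 := by positivity
  have h := ((Real.hasDerivAt_log hpos.ne').div_const 2).comp_hasRealWirtingerDerivAt
    hg.hasRealWirtingerDerivAt_norm_sq
  simp only [Real.log_pow, Nat.cast_ofNat] at h
  have h0' : conj (F z) ≠ 0 := by simpa using h0
  convert h using 1
  · ext x; ring
  · rw [ofReal_div, ofReal_inv, ofReal_pow, ← mul_conj']
    field_simp
    norm_num

lemma hasRealWirtingerDerivAt_log_one_add_norm_sq {f' : ℂ} (hf : HasDerivAt F f' z) :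
    HasRealWirtingerDerivAt (fun x => Real.log (1 + ‖F x‖ ^ 2))
      (f' * conj (F z) / (1 + ‖F z‖ ^ 2 : ℝ)) z := by
  have hpos : 0 < 1 + ‖F z‖ ^ 2 := by positivity
  have h := (((hasDerivAt_id' (‖F z‖ ^ 2)).const_add 1).log hpos.ne').comp_hasRealWirtingerDerivAt
    hf.hasRealWirtingerDerivAt_norm_sq
  convert h using 1
  simp [div_eq_inv_mul]

def sphericalDensity (f : ℂ → ℂ) (z : ℂ) : ℝ := ‖deriv f z‖ / (1 + ‖f z‖ ^ 2)

def dzLogSphericalDensity (f : ℂ → ℂ) (z : ℂ) : ℂ :=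
  deriv (deriv f) z / (2 * deriv f z) - deriv f z * conj (f z) / (1 + ‖f z‖ ^ 2 : ℝ)

variable {f : ℂ → ℂ}

lemma sphericalDensity_pos (hf' : deriv f z ≠ 0) : 0 < sphericalDensity f z := by
  unfold sphericalDensity; positivity

lemma hasRealWirtingerDerivAt_log_sphericalDensity (hf : AnalyticAt ℂ f z)
    (hf' : deriv f z ≠ 0) :
    HasRealWirtingerDerivAt (fun x => Real.log (sphericalDensity f x))
      (dzLogSphericalDensity f z) z := by
  refine ((hasRealWirtingerDerivAt_log_norm hf.deriv.differentiableAt.hasDerivAt hf').sub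
    (hasRealWirtingerDerivAt_log_one_add_norm_sq hf.differentiableAt.hasDerivAt)
    ).congr_of_eventuallyEq ?_
  filter_upwards [hf.deriv.continuousAt.eventually_ne hf'] with x hx
  rw [sphericalDensity, Real.log_div (norm_ne_zero_iff.2 hx) (by positivity)]

/-- Liouville's equation `∂_z̄ ∂_z log λ = -λ²`: the spherical metric pulled back by `f`
has curvature `1`. -/
lemma exists_hasWirtingerDerivAt_dzLogSphericalDensity (hf : AnalyticAt ℂ f z)
    (hf' : deriv f z ≠ 0) :
    ∃ α, HasWirtingerDerivAt (dzLogSphericalDensity f) α (-(sphericalDensity f z ^ 2 : ℝ)) z := by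
  have hpos : 0 < 1 + ‖f z‖ ^ 2 := by positivity
  have hquot := (hf.deriv.deriv.differentiableAt.div (hf.deriv.differentiableAt.const_mul 2)
    (mul_ne_zero two_ne_zero hf')).hasDerivAt.hasWirtingerDerivAt
  have hinv := (((hasDerivAt_id' (‖f z‖ ^ 2)).const_add 1).inv hpos.ne'
    ).comp_hasRealWirtingerDerivAt hf.differentiableAt.hasDerivAt.hasRealWirtingerDerivAt_norm_sq
  have h := hquot.sub ((hf.deriv.differentiableAt.hasDerivAt.hasWirtingerDerivAt.mul
    hf.differentiableAt.hasDerivAt.hasWirtingerDerivAt.star).mul hinv)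
  apply Exists.intro
  convert h using 1
  · ext x
    simp [dzLogSphericalDensity, div_eq_mul_inv]
  · have e₁ : conj (f z) * f z = (‖f z‖ ^ 2 : ℝ) := by push_cast; exact conj_mul' _
    have e₂ : deriv f z * conj (deriv f z) = (‖deriv f z‖ ^ 2 : ℝ) := by
      push_cast; exact mul_conj' _
    simp only [sphericalDensity, Pi.inv_apply, map_mul, conj_ofReal, conj_conj, mul_zero,
      add_zero, zero_sub]
    linear_combination (norm := skip)
      (-deriv f z * conj (deriv f z) / (1 + ‖f z‖ ^ 2 : ℝ) ^ 2) * e₁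
        + (1 / (1 + ‖f z‖ ^ 2 : ℝ) ^ 2 : ℂ) * e₂
    push_cast
    field_simp
    ring

end

theorem ribaucour_equation_of_holomorphic_pair
    (Ω : Set ℂ) (hΩ : IsOpen Ω) (f₁ f₂ : ℂ → ℂ)
    (hf₁ : DifferentiableOn ℂ f₁ Ω) (hf₁' : ∀ z ∈ Ω, deriv f₁ z ≠ 0)
    (hf₂ : DifferentiableOn ℂ f₂ Ω) (hf₂' : ∀ z ∈ Ω, deriv f₂ z ≠ 0)
    (τ : ℂ → ℝ)
    (hτ : ∀ z ∈ Ω, τ z =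
      Real.log (2 * ‖deriv f₁ z‖ / (1 + ‖f₁ z‖ ^ 2)))
    (ρ : ℂ → ℝ)
    (hρ : ∀ z ∈ Ω, ρ z =
      ‖deriv f₁ z‖ * (1 + ‖f₂ z‖ ^ 2) /
        (‖deriv f₂ z‖ * (1 + ‖f₁ z‖ ^ 2))) :
    ∀ z ∈ Ω, ρ z ^ 2 + Real.exp (-(2 * τ z)) * ρ z * lap ρ z
      = 1 + Real.exp (-(2 * τ z)) * (pdx ρ z ^ 2 + pdy ρ z ^ 2) := by
  intro z hz
  have ha₁ := hf₁.analyticOnNhd hΩ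
  have ha₂ := hf₂.analyticOnNhd hΩ
  have hpos₁ := sphericalDensity_pos (hf₁' z hz)
  have hpos₂ := sphericalDensity_pos (hf₂' z hz)
  set v := fun x => Real.log (sphericalDensity f₁ x) - Real.log (sphericalDensity f₂ x)
  have hρv : ρ =ᶠ[𝓝 z] fun x => Real.exp (v x) := by
    filter_upwards [hΩ.mem_nhds hz] with w hw
    rw [hρ w hw, Real.exp_sub, Real.exp_log (sphericalDensity_pos (hf₁' w hw)),
      Real.exp_log (sphericalDensity_pos (hf₂' w hw)), sphericalDensity, sphericalDensity]
    field_simp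
  have hv : ∀ᶠ w in 𝓝 z,
      HasRealWirtingerDerivAt v (dzLogSphericalDensity f₁ w - dzLogSphericalDensity f₂ w) w := by
    filter_upwards [hΩ.mem_nhds hz] with w hw
    exact (hasRealWirtingerDerivAt_log_sphericalDensity (ha₁ w hw) (hf₁' w hw)).sub
      (hasRealWirtingerDerivAt_log_sphericalDensity (ha₂ w hw) (hf₂' w hw))
  obtain ⟨α₁, h₁⟩ := exists_hasWirtingerDerivAt_dzLogSphericalDensity (ha₁ z hz) (hf₁' z hz)
  obtain ⟨α₂, h₂⟩ := exists_hasWirtingerDerivAt_dzLogSphericalDensity (ha₂ z hz) (hf₂' z hz)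
  have hτz : Real.exp (-(2 * τ z)) = (4 * sphericalDensity f₁ z ^ 2)⁻¹ := by
    rw [hτ z hz, mul_div_assoc, ← sphericalDensity, Real.exp_neg, two_mul, Real.exp_add,
      Real.exp_log (by positivity)]
    ring
  rw [ribaucour_equation_iff_of_eventuallyEq_exp _ hρv hv (h₁.sub h₂), hρv.eq_of_nhds, hτz,
    Real.exp_sub, Real.exp_log hpos₁, Real.exp_log hpos₂]
  simp only [sub_re, neg_re, ofReal_re]
  field_simp
  ring
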